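/- arXiv:2411.19846 — 5 statements merged into one kernel-verified Lean document; each statement's English description precedes it below -/
import Mathlib

section
/- Let (W, A, T, μ) be a twisted group algebra datum over ℂ with W a finite abelian group, and assume ZW = {1}, i.e. the only w ∈ W with T w * T v = T v * T w for all v ∈ W is the identity. Then there exists a natural number d with d² = |W| such that A is isomorphic as a ℂ-algebra to the algebra of d × d matrices over ℂ. -/
/-- A twisted group algebra datum `(W, A, T, μ)` over `ℂ`: a group `W`, an associative unital
`ℂ`-algebra `A`, a map `T` from `W` to the units of `A` whose values form a `ℂ`-basis of `A`,
and a map `μ : W × W → ℂˣ` with `T w * T v = μ(w,v) • T (w * v)` for all `w, v`. -/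
structure TwistedGroupAlgebraDatum (W : Type*) [Group W] (A : Type*) [Ring A]
    [Algebra ℂ A] where
  /-- The distinguished family of units. -/
  T : W → Aˣ
  /-- The twisting 2-cocycle. -/
  μ : W → W → ℂˣ
  linearIndependent_T : LinearIndependent ℂ fun w : W => (T w : A)
  span_T : Submodule.span ℂ (Set.range fun w : W => (T w : A)) = ⊤
  T_mul : ∀ w v : W, (T w : A) * (T v : A) = (μ w v : ℂ) • (T (w * v) : A)

/-- The set `ZW = {w ∈ W : T w * T v = T v * T w for all v ∈ W}`. -/
def TwistedGroupAlgebraDatum.ZW {W : Type*} [Group W] {A : Type*} [Ring A] [Algebra ℂ A]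
    (D : TwistedGroupAlgebraDatum W A) : Set W :=
  {w : W | ∀ v : W, (D.T w : A) * (D.T v : A) = (D.T v : A) * (D.T w : A)}

/-!
Conjugation by `T v` multiplies `T w` by the scalar `γ(w, v) = μ(v, w) / μ(w, v)`, and since `W`
is abelian, `v ↦ γ(w, v)` is a character of `W`; it is trivial exactly when `w ∈ ZW`. Hence the
average `x ↦ ∑ v, T v * x * (T v)⁻¹` sends `x` to `|W|` times its `T 1`-coefficient times
`T 1`.
A nonzero two-sided ideal contains some `x * T g⁻¹` with nonzero `T 1`-coefficient, hence a
nonzero scalar, hence `1`: `A` is simple. By Wedderburn–Artin over the algebraically closed `ℂ`,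
`A ≃ M_d(ℂ)`, and comparing dimensions gives `d² = |W|`.
-/

namespace TwistedGroupAlgebraDatum

open Module

section Group

variable {W : Type*} [Group W] {A : Type*} [Ring A] [Algebra ℂ A]
  (D : TwistedGroupAlgebraDatum W A)

noncomputable def basis : Basis W ℂ A := .mk D.linearIndependent_T D.span_T.ge

@[simp]
lemma basis_apply (w : W) : D.basis w = D.T w := Basis.mk_apply _ _ _

lemma T_ne_zero (w : W) : (D.T w : A) ≠ 0 := LinearIndependent.ne_zero w D.linearIndependent_T

lemma nontrivial (D : TwistedGroupAlgebraDatum W A) : Nontrivial A :=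
  nontrivial_of_ne _ _ (D.T_ne_zero 1)

lemma T_one : (D.T 1 : A) = (D.μ 1 1 : ℂ) • 1 := by
  have h := congrArg (· * (((D.T 1)⁻¹ : Aˣ) : A)) (D.T_mul 1 1)
  simpa [mul_assoc, smul_mul_assoc] using h

lemma repr_mul_T (x : A) (w g : W) :
    D.basis.repr (x * D.T g) (w * g) = D.μ w g * D.basis.repr x w := by
  classical
  have h : D.basis.coord (w * g) ∘ₗ LinearMap.mulRight ℂ (D.T g : A) =
      (D.μ w g : ℂ) • D.basis.coord w := by
    refine D.basis.ext fun w' => ?_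
    rw [LinearMap.comp_apply, LinearMap.mulRight_apply, basis_apply, D.T_mul, map_smul,
      ← basis_apply, LinearMap.smul_apply, ← basis_apply]
    simp only [Basis.coord_apply, Basis.repr_self, Finsupp.single_apply, mul_left_inj,
      smul_eq_mul]
    split_ifs with hw <;> simp [hw]
  exact LinearMap.congr_fun h x

end Group

section CommGroup

variable {W : Type*} [CommGroup W] {A : Type*} [Ring A] [Algebra ℂ A]
  (D : TwistedGroupAlgebraDatum W A)

def commFactor (w v : W) : ℂˣ := D.μ v w / D.μ w v

lemma T_mul_T_eq_commFactor_smul (w v : W) :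
    (D.T v : A) * D.T w = (D.commFactor w v : ℂ) • (D.T w * D.T v) := by
  rw [D.T_mul, D.T_mul, smul_smul, mul_comm w v, commFactor, Units.val_div_eq_div_val,
    div_mul_cancel₀ _ (D.μ w v).ne_zero]

lemma commFactor_mul_right (w u v : W) :
    D.commFactor w (u * v) = D.commFactor w u * D.commFactor w v := by
  have := D.nontrivial
  have h : ((D.μ u v * D.commFactor w (u * v) : ℂˣ) : ℂ) • ((D.T w : A) * D.T (u * v)) =
      ((D.μ u v * (D.commFactor w u * D.commFactor w v) : ℂˣ) : ℂ) •
        ((D.T w : A) * D.T (u * v)) := by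
    calc _ = (D.μ u v : ℂ) • ((D.T (u * v) : A) * D.T w) := by
          rw [D.T_mul_T_eq_commFactor_smul w (u * v), smul_smul, Units.val_mul]
      _ = D.T u * (D.T v * D.T w) := by rw [← smul_mul_assoc, ← D.T_mul, mul_assoc]
      _ = _ := by
          rw [D.T_mul_T_eq_commFactor_smul w v, mul_smul_comm, ← mul_assoc,
            D.T_mul_T_eq_commFactor_smul w u, smul_mul_assoc, mul_assoc, D.T_mul, mul_smul_comm,
            smul_smul, smul_smul]
          congr 1
          push_cast
          ring
  exact mul_left_cancel (Units.ext (smul_left_injective ℂ (D.T w * D.T (u * v)).ne_zero h))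

lemma T_mul_mul_inv_T (w v : W) :
    (D.T v : A) * D.T w * ↑(D.T v)⁻¹ = (D.commFactor w v : ℂ) • (D.T w : A) := by
  rw [D.T_mul_T_eq_commFactor_smul, smul_mul_assoc, mul_assoc, Units.mul_inv, mul_one]

def commChar (w : W) : W →* ℂˣ := MonoidHom.mk' (D.commFactor w) (D.commFactor_mul_right w)

variable [Fintype W]

lemma sum_commFactor_eq_zero {w : W} (hw : w ∉ D.ZW) :
    ∑ v, (D.commFactor w v : ℂ) = 0 := by
  refine sum_hom_units_eq_zero ((Units.coeHom ℂ).comp (D.commChar w)) fun h => hw fun v => ?_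
  have hv : D.commFactor w v = 1 := Units.ext (DFunLike.congr_fun h v)
  rw [D.T_mul_T_eq_commFactor_smul w v, hv, Units.val_one, one_smul]

lemma sum_T_mul_mul_inv_T (hZ : D.ZW = {1}) (x : A) :
    ∑ v, (D.T v : A) * x * ↑(D.T v)⁻¹ =
      ((Fintype.card W : ℂ) * D.basis.repr x 1) • (D.T 1 : A) := by
  classical
  have h : ∑ v, LinearMap.mulLeftRight ℂ ((D.T v : A), ((D.T v)⁻¹ : Aˣ)) =
      (D.basis.coord 1).smulRight ((Fintype.card W : ℂ) • (D.T 1 : A)) := by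
    refine D.basis.ext fun w => ?_
    rw [LinearMap.sum_apply, LinearMap.smulRight_apply, Basis.coord_apply,
      Basis.repr_self, basis_apply]
    simp only [LinearMap.mulLeftRight_apply]
    by_cases hw : w = 1
    · subst hw
      simp only [D.T_one, mul_smul_comm, smul_mul_assoc, mul_one, Units.mul_inv,
        Finset.sum_const, Finset.card_univ, Finsupp.single_eq_same, one_smul]
      rw [Nat.cast_smul_eq_nsmul, smul_comm]
    · rw [Finsupp.single_eq_of_ne (Ne.symm hw), zero_smul]
      simp only [D.T_mul_mul_inv_T, ← Finset.sum_smul]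
      rw [D.sum_commFactor_eq_zero (by rwa [hZ]), zero_smul]
  simpa [smul_smul, mul_comm] using LinearMap.congr_fun h x

lemma isSimpleRing (hZ : D.ZW = {1}) : IsSimpleRing A := by
  have := D.nontrivial
  refine .of_eq_bot_or_eq_top fun I => or_iff_not_imp_left.mpr fun hI => ?_
  obtain ⟨x, hxI, hx0 : x ≠ 0⟩ := SetLike.exists_of_lt (bot_lt_iff_ne_bot.mpr hI)
  obtain ⟨g, hg⟩ : ∃ g, D.basis.repr x g ≠ 0 :=
    Finsupp.ne_iff.mp ((map_ne_zero_iff _ D.basis.repr.injective).mpr hx0)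
  set z := x * D.T g⁻¹
  have hzI : z ∈ I := I.mul_mem_right _ _ hxI
  have hz : D.basis.repr z 1 ≠ 0 := by
    rw [← mul_inv_cancel g, D.repr_mul_T]
    exact mul_ne_zero (D.μ g g⁻¹).ne_zero hg
  have hc : (Fintype.card W : ℂ) * D.basis.repr z 1 ≠ 0 := mul_ne_zero (by simp) hz
  have hsum : ∑ v, (D.T v : A) * z * ↑(D.T v)⁻¹ ∈ I :=
    sum_mem fun v _ => I.mul_mem_right _ _ (I.mul_mem_left _ _ hzI)
  rw [D.sum_T_mul_mul_inv_T hZ] at hsum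
  have h1 := I.mul_mem_left ((Fintype.card W * D.basis.repr z 1)⁻¹ • ↑(D.T 1)⁻¹) _ hsum
  rwa [smul_mul_smul_comm, inv_mul_cancel₀ hc, Units.inv_mul, one_smul, I.one_mem_iff] at h1

end CommGroup

end TwistedGroupAlgebraDatum

/-- For a twisted group algebra datum over `ℂ` with `W` finite abelian and `ZW = {1}`,
there is `d` with `d² = |W|` such that `A ≅ M_d(ℂ)` as `ℂ`-algebras. -/
theorem matrix_algebra_of_ZW_trivial {W : Type*} [CommGroup W] [Fintype W]
    {A : Type*} [Ring A] [Algebra ℂ A]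
    (D : TwistedGroupAlgebraDatum W A) (hZ : D.ZW = {1}) :
    ∃ d : ℕ, d ^ 2 = Fintype.card W ∧
      Nonempty (A ≃ₐ[ℂ] Matrix (Fin d) (Fin d) ℂ) := by
  have := D.isSimpleRing hZ
  have := Module.Finite.of_basis D.basis
  obtain ⟨d, -, ⟨e⟩⟩ := IsSimpleRing.exists_algEquiv_matrix_of_isAlgClosed ℂ A
  refine ⟨d, ?_, ⟨e⟩⟩
  have h := e.toLinearEquiv.finrank_eq
  rwa [Module.finrank_eq_card_basis D.basis, Module.finrank_matrix, Module.finrank_self, mul_one,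
    Fintype.card_fin, ← sq, eq_comm] at h
end

section
/- Let Q be a finite abelian group and b : Q × Q → ℂˣ a map that is multiplicative in each variable, alternating (b(x, x) = 1 for all x ∈ Q), and nondegenerate (if b(x, y) = 1 for all y ∈ Q then x = 1). Let C be a subgroup of Q such that C = {x ∈ Q : b(x, c) = 1 for all c ∈ C} (a Lagrangian subgroup). Then the group homomorphism from Q to the group of homomorphisms C → ℂˣ, sending x to the character c ↦ b(x, c) of C, is surjective and has kernel exactly C; hence it induces a group isomorphism Q/C ≅ Hom(C, ℂˣ). -/
/-!
The form `b` is a homomorphism `Q →* (Q →* ℂˣ)`, injective by nondegeneracy; since a finite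
abelian group has as many complex characters as elements, it is bijective. Every character of `C`
extends to `Q`, so composing with restriction to `C` stays surjective, and its kernel is the
orthogonal complement of `C`, which is `C` itself.
-/

open CommGroup MonoidHom

section Pairing

variable {G M : Type*} [CommGroup G] [Finite G] [CommMonoid M]
  [HasEnoughRootsOfUnity M (Monoid.exponent G)]

theorem MonoidHom.bijective_of_injective_pairing {B : G →* G →* Mˣ} (hB : Function.Injective B) :
    Function.Bijective B := by
  have hcard : Nat.card (G →* Mˣ) = Nat.card G := card_monoidHom_of_hasEnoughRootsOfUnity G M
  have : Finite (G →* Mˣ) := Nat.finite_of_card_ne_zero (hcard ▸ Nat.card_pos.ne')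
  exact hB.bijective_of_nat_card_le hcard.le

theorem MonoidHom.surjective_domRestrictHom_comp_pairing {B : G →* G →* Mˣ}
    (hB : Function.Injective B) (H : Subgroup G) :
    Function.Surjective ((domRestrictHom H Mˣ).comp B) :=
  (domRestrict_surjective M H).comp (bijective_of_injective_pairing hB).surjective

end Pairing

theorem MonoidHom.mem_ker_domRestrictHom_comp_pairing {G M : Type*} [Group G] [CommMonoid M]
    (B : G →* G →* M) (H : Subgroup G) (x : G) :
    x ∈ ((domRestrictHom H M).comp B).ker ↔ ∀ h ∈ H, B x h = 1 := by
  simp [MonoidHom.ext_iff]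

theorem lagrangian_quotient_iso_characters_general {Q : Type*} [CommGroup Q] [Fintype Q]
    (b : Q → Q → ℂˣ)
    (hmul_left : ∀ x x' y : Q, b (x * x') y = b x y * b x' y)
    (hmul_right : ∀ x y y' : Q, b x (y * y') = b x y * b x y')
    (hnd : ∀ x : Q, (∀ y : Q, b x y = 1) → x = 1)
    (C : Subgroup Q)
    (hC : (C : Set Q) = {x : Q | ∀ c ∈ C, b x c = 1}) :
    ∃ φ : Q →* (C →* ℂˣ),
      (∀ (x : Q) (c : C), φ x c = b x (c : Q)) ∧
      Function.Surjective φ ∧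
      φ.ker = C ∧
      Nonempty ((Q ⧸ C) ≃* (C →* ℂˣ)) := by
  let B : Q →* Q →* ℂˣ :=
    MonoidHom.mk' (fun x ↦ MonoidHom.mk' (b x) (hmul_right x)) fun x x' ↦ ext (hmul_left x x')
  have hB : Function.Injective B :=
    (injective_iff_map_eq_one B).2 fun x hx ↦ hnd x fun y ↦ DFunLike.congr_fun hx y
  have : NeZero (Monoid.exponent Q : ℂ) := ⟨Nat.cast_ne_zero.2 Monoid.exponent_ne_zero_of_finite⟩
  have hsurj := surjective_domRestrictHom_comp_pairing hB C
  have hker : ((domRestrictHom C ℂˣ).comp B).ker = C := by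
    ext x
    rw [mem_ker_domRestrictHom_comp_pairing, ← SetLike.mem_coe, hC]
    rfl
  exact ⟨_, fun _ _ ↦ rfl, hsurj, hker,
    ⟨(QuotientGroup.quotientMulEquivOfEq hker.symm).trans
      (QuotientGroup.quotientKerEquivOfSurjective _ hsurj)⟩⟩

/-- Let `Q` be a finite abelian group and `b : Q × Q → ℂˣ` a nondegenerate alternating
bicharacter. If `C` is a Lagrangian subgroup of `Q` (i.e. `C` equals its own orthogonal
complement with respect to `b`), then the homomorphism `Q → Hom(C, ℂˣ)`, `x ↦ (c ↦ b x c)`,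
is surjective with kernel exactly `C`; hence it induces `Q/C ≃* Hom(C, ℂˣ)`. -/
theorem lagrangian_quotient_iso_characters {Q : Type*} [CommGroup Q] [Fintype Q]
    (b : Q → Q → ℂˣ)
    (hmul_left : ∀ x x' y : Q, b (x * x') y = b x y * b x' y)
    (hmul_right : ∀ x y y' : Q, b x (y * y') = b x y * b x y')
    (halt : ∀ x : Q, b x x = 1)
    (hnd : ∀ x : Q, (∀ y : Q, b x y = 1) → x = 1)
    (C : Subgroup Q)
    (hC : (C : Set Q) = {x : Q | ∀ c ∈ C, b x c = 1}) :
    ∃ φ : Q →* (C →* ℂˣ),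
      (∀ (x : Q) (c : C), φ x c = b x (c : Q)) ∧
      Function.Surjective φ ∧
      φ.ker = C ∧
      Nonempty ((Q ⧸ C) ≃* (C →* ℂˣ)) :=
  lagrangian_quotient_iso_characters_general b hmul_left hmul_right hnd C hC
end

section
/- Let k be a finite field with q elements and let χ : kˣ → ℂˣ be a group homomorphism with χ ≠ 1 and χ² = 1 (the Legendre symbol of k). In the group algebra ℂ[SL₂(k)], define the elements ⟨U⟩ := q⁻¹ · Σ_{x ∈ k} [U(x)], p_χ := (q − 1)⁻¹ · Σ_{x ∈ kˣ} χ(x) · [D(x)], T_e := p_χ * ⟨U⟩, and T' := ⟨U⟩ * [s] * p_χ * ⟨U⟩. Then T_e * T_e = T_e and T' * T' = χ(−1) · q⁻¹ · T_e. (In particular T'² is a scalar multiple of the idempotent T_e, so the quadratic relation satisfied by the associated Hecke algebra generator has parameter q_{θ,α} = 1.) -/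
open Matrix MonoidAlgebra

noncomputable section

variable (k : Type*) [Field k] [Fintype k] [DecidableEq k]

/-- The special linear group `SL₂(k)`. -/
abbrev SL2 := Matrix.SpecialLinearGroup (Fin 2) k

/-- The unipotent matrix `U(x)` with rows `(1, x)` and `(0, 1)`. -/
def Umat (x : k) : SL2 k :=
  ⟨!![1, x; 0, 1], by simp [Matrix.det_fin_two_of]⟩

/-- The diagonal matrix `D(x)` with entries `x` and `x⁻¹`, for `x ∈ kˣ`. -/
def Dmat (x : kˣ) : SL2 k :=
  ⟨!![(x : k), 0; 0, ((x⁻¹ : kˣ) : k)], by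
    simp [Matrix.det_fin_two_of, ← Units.val_mul]⟩

/-- The matrix `s` with rows `(0, 1)` and `(−1, 0)`. -/
def smat : SL2 k :=
  ⟨!![0, 1; -1, 0], by simp [Matrix.det_fin_two_of]⟩

/-- `⟨U⟩ = q⁻¹ · Σ_{x ∈ k} [U(x)]` in `ℂ[SL₂(k)]`. -/
def bracketU : MonoidAlgebra ℂ (SL2 k) :=
  ((Fintype.card k : ℂ))⁻¹ • ∑ x : k, MonoidAlgebra.of ℂ (SL2 k) (Umat k x)

/-- `p_χ = (q − 1)⁻¹ · Σ_{x ∈ kˣ} χ(x) · [D(x)]` in `ℂ[SL₂(k)]`. -/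
def pChi (χ : kˣ →* ℂˣ) : MonoidAlgebra ℂ (SL2 k) :=
  ((Fintype.card k : ℂ) - 1)⁻¹ •
    ∑ x : kˣ, ((χ x : ℂ) • MonoidAlgebra.of ℂ (SL2 k) (Dmat k x))

/-! `⟨U⟩` and `p_χ` are commuting idempotents (`p_χ` is the idempotent of the character `χ` of the
diagonal torus, which normalises `U`), so `T_e = p_χ⟨U⟩` is idempotent. When `χ = χ⁻¹`, `[s]`
commutes with `p_χ` as well, and `T'² = T_e [s]⟨U⟩[s] T_e = q⁻¹ Σ_x T_e [s U(x) s] T_e`.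
For `x ≠ 0` the Bruhat decomposition `s U(x) s = U(-x⁻¹) D(x⁻¹) s U(-x⁻¹) D(-1)` makes the
`x`-term equal to `χ(x) χ(-1) · T_e [s] T_e`, and these cancel since `Σ_x χ(x) = 0`; only
`s U(0) s = D(-1)` survives, contributing `χ(-1) · T_e`. -/

local notation "δ" g:max => MonoidAlgebra.of ℂ _ g

theorem Fintype.sum_eq_add_sum_units {G₀ M : Type*} [GroupWithZero G₀] [Fintype G₀]
    [DecidableEq G₀] [AddCommMonoid M] (f : G₀ → M) :
    ∑ x, f x = f 0 + ∑ u : G₀ˣ, f u := by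
  rw [← Fintype.sum_subtype_add_sum_subtype (· = 0) f]
  congr 1
  · simp only [Finset.univ_unique, Finset.sum_singleton]
    rfl
  · exact (Equiv.sum_comp unitsEquivNeZero (fun x : {a : G₀ // a ≠ 0} => f x)).symm

theorem Fintype.inv_card_smul_sum_const {ι K A : Type*} [Fintype ι] [Nonempty ι] [DivisionRing K]
    [CharZero K] [AddCommMonoid A] [Module K A] (a : A) :
    (Fintype.card ι : K)⁻¹ • ∑ _i : ι, a = a := by
  rw [Finset.sum_const, Finset.card_univ, ← Nat.cast_smul_eq_nsmul K, smul_smul,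
    inv_mul_cancel₀ (by simp), one_smul]

theorem MonoidHom.sum_coe_units_eq_zero {G R : Type*} [Group G] [Fintype G] [CommRing R]
    [IsDomain R] (χ : G →* Rˣ) (hχ : χ ≠ 1) : ∑ g, (χ g : R) = 0 := by
  refine sum_hom_units_eq_zero ((Units.coeHom R).comp χ) fun h => hχ ?_
  ext g
  simpa using DFunLike.congr_fun h g

section Matrices

variable {F : Type*} [Field F]

theorem Umat_mul_Umat (x y : F) : Umat F x * Umat F y = Umat F (x + y) := by
  ext i j
  simp only [Matrix.SpecialLinearGroup.coe_mul]
  fin_cases i <;> fin_cases j <;> simp [Umat, add_comm]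

theorem Umat_zero : Umat F 0 = 1 := by
  ext i j
  fin_cases i <;> fin_cases j <;> simp [Umat]

theorem Dmat_mul_Dmat (a b : Fˣ) : Dmat F a * Dmat F b = Dmat F (a * b) := by
  ext i j
  simp only [Matrix.SpecialLinearGroup.coe_mul]
  fin_cases i <;> fin_cases j <;> simp [Dmat, mul_comm]

theorem smat_mul_smat : smat F * smat F = Dmat F (-1) := by
  ext i j
  simp only [Matrix.SpecialLinearGroup.coe_mul]
  fin_cases i <;> fin_cases j <;> simp [smat, Dmat]

theorem Dmat_mul_Umat (a : Fˣ) (x : F) :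
    Dmat F a * Umat F x = Umat F ((a : F) ^ 2 * x) * Dmat F a := by
  ext i j
  simp only [Matrix.SpecialLinearGroup.coe_mul]
  fin_cases i <;> fin_cases j <;> simp [Dmat, Umat]
  field_simp

theorem smat_mul_Dmat (a : Fˣ) : smat F * Dmat F a = Dmat F a⁻¹ * smat F := by
  ext i j
  simp only [Matrix.SpecialLinearGroup.coe_mul]
  fin_cases i <;> fin_cases j <;> simp [smat, Dmat]

theorem smat_mul_Umat_mul_smat (u : Fˣ) :
    smat F * Umat F u * smat F =
      Umat F (-(u : F)⁻¹) * Dmat F u⁻¹ * smat F * Umat F (-(u : F)⁻¹) * Dmat F (-1) := by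
  ext i j
  simp only [Matrix.SpecialLinearGroup.coe_mul]
  fin_cases i <;> fin_cases j <;> simp [smat, Umat, Dmat]

theorem commute_Dmat_Dmat (a b : Fˣ) : Commute (Dmat F a) (Dmat F b) := by
  rw [Commute, SemiconjBy, Dmat_mul_Dmat, Dmat_mul_Dmat, mul_comm]

end Matrices

section

omit [DecidableEq k]

theorem bracketU_mul_of_Umat (a : k) : bracketU k * δ (Umat k a) = bracketU k := by
  rw [bracketU, smul_mul_assoc, Finset.sum_mul]
  congr 1
  refine Fintype.sum_equiv (Equiv.addRight a) _ _ fun x => ?_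
  rw [← map_mul, Umat_mul_Umat]
  rfl

theorem of_Umat_mul_bracketU (a : k) : δ (Umat k a) * bracketU k = bracketU k := by
  rw [bracketU, mul_smul_comm, Finset.mul_sum]
  congr 1
  refine Fintype.sum_equiv (Equiv.addLeft a) _ _ fun x => ?_
  rw [← map_mul, Umat_mul_Umat]
  rfl

theorem bracketU_mul_bracketU : bracketU k * bracketU k = bracketU k := by
  nth_rewrite 2 [bracketU]
  rw [mul_smul_comm, Finset.mul_sum]
  simp only [bracketU_mul_of_Umat]
  exact Fintype.inv_card_smul_sum_const _

theorem commute_of_Dmat_bracketU (a : kˣ) : Commute (δ (Dmat k a)) (bracketU k) := by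
  rw [Commute, SemiconjBy, bracketU, mul_smul_comm, smul_mul_assoc, Finset.mul_sum, Finset.sum_mul]
  congr 1
  refine Fintype.sum_equiv (Equiv.mulLeft₀ ((a : k) ^ 2) (by simp)) _ _ fun x => ?_
  rw [← map_mul, Dmat_mul_Umat, map_mul]
  rfl

end

theorem pChi_eq_inv_card_units_smul (χ : kˣ →* ℂˣ) :
    pChi k χ = (Fintype.card kˣ : ℂ)⁻¹ • ∑ x : kˣ, ((χ x : ℂ) • δ (Dmat k x)) := by
  rw [pChi, Fintype.card_units, Nat.cast_sub Fintype.card_pos, Nat.cast_one]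

theorem of_Dmat_mul_pChi (χ : kˣ →* ℂˣ) (a : kˣ) :
    δ (Dmat k a) * pChi k χ = (χ a⁻¹ : ℂ) • pChi k χ := by
  have hsum : ∑ x, δ (Dmat k a) * ((χ x : ℂ) • δ (Dmat k x)) =
      ∑ x, (χ a⁻¹ : ℂ) • (χ x : ℂ) • δ (Dmat k x) :=
    Fintype.sum_equiv (Equiv.mulLeft a) _ _ fun x => by
      simp [Dmat_mul_Dmat, map_mul]
  rw [pChi, mul_smul_comm, Finset.mul_sum, hsum, ← Finset.smul_sum, smul_comm]

theorem commute_of_Dmat_pChi (χ : kˣ →* ℂˣ) (a : kˣ) : Commute (δ (Dmat k a)) (pChi k χ) :=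
  (Commute.sum_right _ _ _ fun b _ => ((commute_Dmat_Dmat a b).map _).smul_right _).smul_right _

theorem pChi_mul_pChi (χ : kˣ →* ℂˣ) : pChi k χ * pChi k χ = pChi k χ := by
  have hterm (x : kˣ) : ((χ x : ℂ) • δ (Dmat k x)) * pChi k χ = pChi k χ := by
    rw [smul_mul_assoc, of_Dmat_mul_pChi, smul_smul, ← Units.val_mul, ← map_mul, mul_inv_cancel,
      map_one, Units.val_one, one_smul]
  nth_rewrite 1 [pChi_eq_inv_card_units_smul]
  rw [smul_mul_assoc, Finset.sum_mul]
  simp only [hterm]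
  exact Fintype.inv_card_smul_sum_const _

theorem commute_bracketU_pChi (χ : kˣ →* ℂˣ) : Commute (bracketU k) (pChi k χ) :=
  (Commute.sum_right _ _ _ fun a _ => (commute_of_Dmat_bracketU k a).symm.smul_right _).smul_right _

theorem of_smat_mul_pChi (χ : kˣ →* ℂˣ) : δ (smat k) * pChi k χ = pChi k χ⁻¹ * δ (smat k) := by
  rw [pChi, pChi, mul_smul_comm, smul_mul_assoc, Finset.mul_sum, Finset.sum_mul]
  congr 1
  refine Fintype.sum_equiv (Equiv.inv kˣ) _ _ fun x => ?_
  simp [smat_mul_Dmat]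

def Te (χ : kˣ →* ℂˣ) : MonoidAlgebra ℂ (SL2 k) := pChi k χ * bracketU k

def Tprime (χ : kˣ →* ℂˣ) : MonoidAlgebra ℂ (SL2 k) :=
  bracketU k * δ (smat k) * pChi k χ * bracketU k

section

variable (χ : kˣ →* ℂˣ)

theorem Te_mul_Te : Te k χ * Te k χ = Te k χ := by
  rw [Te, mul_assoc, ← mul_assoc (bracketU k), (commute_bracketU_pChi k χ).eq, mul_assoc,
    bracketU_mul_bracketU, ← mul_assoc, pChi_mul_pChi]

theorem of_Umat_mul_Te (a : k) : δ (Umat k a) * Te k χ = Te k χ := by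
  rw [Te, ← (commute_bracketU_pChi k χ).eq, ← mul_assoc, of_Umat_mul_bracketU]

theorem Te_mul_of_Umat (a : k) : Te k χ * δ (Umat k a) = Te k χ := by
  rw [Te, mul_assoc, bracketU_mul_of_Umat]

theorem of_Dmat_mul_Te (a : kˣ) : δ (Dmat k a) * Te k χ = (χ a⁻¹ : ℂ) • Te k χ := by
  rw [Te, ← mul_assoc, of_Dmat_mul_pChi, smul_mul_assoc]

theorem Te_mul_of_Dmat (a : kˣ) : Te k χ * δ (Dmat k a) = (χ a⁻¹ : ℂ) • Te k χ := by
  rw [Te, mul_assoc, ← (commute_of_Dmat_bracketU k a).eq, ← mul_assoc,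
    ← (commute_of_Dmat_pChi k χ a).eq, of_Dmat_mul_pChi, smul_mul_assoc]

theorem Te_mul_of_smat_mul_Umat_mul_smat_mul_Te (u : kˣ) :
    Te k χ * δ (smat k * Umat k u * smat k) * Te k χ =
      ((χ (-1) : ℂ) * χ u) • (Te k χ * δ (smat k) * Te k χ) := by
  rw [smat_mul_Umat_mul_smat]
  simp only [map_mul, mul_assoc, of_Dmat_mul_Te, of_Umat_mul_Te, mul_smul_comm]
  rw [← mul_assoc (Te k χ), Te_mul_of_Umat, ← mul_assoc (Te k χ), Te_mul_of_Dmat]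
  simp only [smul_mul_assoc, smul_smul, inv_inv, inv_neg_one]

theorem Te_mul_of_smat_mul_smat_mul_Te :
    Te k χ * δ (smat k * smat k) * Te k χ = (χ (-1) : ℂ) • Te k χ := by
  rw [smat_mul_smat, Te_mul_of_Dmat, smul_mul_assoc, Te_mul_Te, inv_neg_one]

theorem Te_mul_of_smat_mul_bracketU_mul_of_smat_mul_Te (hχ : χ ≠ 1) :
    Te k χ * δ (smat k) * bracketU k * δ (smat k) * Te k χ =
      ((χ (-1) : ℂ) * (Fintype.card k : ℂ)⁻¹) • Te k χ := by
  have hexpand : Te k χ * δ (smat k) * bracketU k * δ (smat k) * Te k χ =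
      (Fintype.card k : ℂ)⁻¹ • ∑ x, Te k χ * δ (smat k * Umat k x * smat k) * Te k χ := by
    simp only [bracketU, mul_smul_comm, smul_mul_assoc, Finset.mul_sum, Finset.sum_mul, map_mul,
      mul_assoc]
  rw [hexpand, Fintype.sum_eq_add_sum_units, Umat_zero, mul_one, Te_mul_of_smat_mul_smat_mul_Te]
  simp only [Te_mul_of_smat_mul_Umat_mul_smat_mul_Te]
  rw [← Finset.sum_smul, ← Finset.mul_sum, MonoidHom.sum_coe_units_eq_zero χ hχ, mul_zero,
    zero_smul, add_zero, smul_smul, mul_comm]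

theorem Tprime_mul_Tprime (hχ : χ⁻¹ = χ) :
    Tprime k χ * Tprime k χ = Te k χ * δ (smat k) * bracketU k * δ (smat k) * Te k χ := by
  have hsP : δ (smat k) * pChi k χ = pChi k χ * δ (smat k) := by
    rw [of_smat_mul_pChi, hχ]
  calc Tprime k χ * Tprime k χ
      = bracketU k * (δ (smat k) * pChi k χ) * (bracketU k * bracketU k) * δ (smat k) *
          pChi k χ * bracketU k := by simp only [Tprime, mul_assoc]
    _ = bracketU k * pChi k χ * δ (smat k) * bracketU k * δ (smat k) * pChi k χ * bracketU k := by
          rw [hsP, bracketU_mul_bracketU]; simp only [mul_assoc]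
    _ = Te k χ * δ (smat k) * bracketU k * δ (smat k) * Te k χ := by
          rw [(commute_bracketU_pChi k χ).eq]; simp only [Te, mul_assoc]

end

/-- For the Legendre symbol `χ` of a finite field `k` with `q` elements (`χ ≠ 1`, `χ² = 1`),
in `ℂ[SL₂(k)]` with `T_e := p_χ * ⟨U⟩` and `T' := ⟨U⟩ * [s] * p_χ * ⟨U⟩`, one has
`T_e * T_e = T_e` and `T' * T' = χ(−1) · q⁻¹ · T_e`. -/
theorem legendre_hecke_parameter_one (χ : kˣ →* ℂˣ) (hχ : χ ≠ 1)
    (hχ2 : ∀ x : kˣ, χ x * χ x = 1) :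
    (pChi k χ * bracketU k) * (pChi k χ * bracketU k) = pChi k χ * bracketU k ∧
    (bracketU k * MonoidAlgebra.of ℂ (SL2 k) (smat k) * pChi k χ * bracketU k) *
        (bracketU k * MonoidAlgebra.of ℂ (SL2 k) (smat k) * pChi k χ * bracketU k) =
      (((χ (-1) : ℂˣ) : ℂ) * (Fintype.card k : ℂ)⁻¹) • (pChi k χ * bracketU k) := by
  have hinv : χ⁻¹ = χ := MonoidHom.ext fun x => inv_eq_of_mul_eq_one_right (hχ2 x)
  exact ⟨Te_mul_Te k χ,
    (Tprime_mul_Tprime k χ hinv).trans (Te_mul_of_smat_mul_bracketU_mul_of_smat_mul_Te k χ hχ)⟩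

end
end

section
/- Let n be a natural number, σ a permutation of Fin n, and ε : Fin n → ℝ a function with ε(i) ∈ {1, −1} for every i. The following are equivalent: (a) the only function x : Fin n → ℝ satisfying x(i) = ε(i) · x(σ⁻¹(i)) for all i ∈ Fin n is the zero function; (b) for every orbit O of the cyclic group generated by σ acting on Fin n, the product ∏_{i ∈ O} ε(i) equals −1. -/
/-- The orbit of `i` under the cyclic group generated by `σ`. -/
def permOrbit {n : ℕ} (σ : Equiv.Perm (Fin n)) (i : Fin n) : Set (Fin n) :=
  {j : Fin n | ∃ k : ℤ, (σ ^ k) i = j}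

/-!
Write `τ = σ⁻¹`. Following the orbit of `i`, a fixed vector satisfies
`x i = (∏_{s<t} ε (τ^s i)) * x (τ^t i)`; once around the cycle this reads `x i = P * x i`, where
`P` is the sign product of the orbit, so `P = -1` forces `x = 0` on the orbit. If instead `P = 1`,
the value `∏_{s<t} ε (τ^s i)` placed at `τ^t i` closes up consistently around the cycle and is a
nonzero fixed vector supported on the orbit.
-/

open Finset Function

section IterateProd

variable {α R : Type*}

def iterateProd [CommMonoid R] (f : α → α) (ε : α → R) (a : α) (t : ℕ) : R :=
  ∏ s ∈ range t, ε (f^[s] a)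

theorem iterateProd_succ [CommMonoid R] (f : α → α) (ε : α → R) (a : α) (t : ℕ) :
    iterateProd f ε a (t + 1) = iterateProd f ε a t * ε (f^[t] a) :=
  prod_range_succ _ _

theorem iterateProd_mul_self [CommMonoid R] {ε : α → R} (hε : ∀ j, ε j * ε j = 1)
    (f : α → α) (a : α) (t : ℕ) : iterateProd f ε a t * iterateProd f ε a t = 1 := by
  rw [iterateProd, ← prod_mul_distrib]
  exact prod_eq_one fun s _ => hε _

theorem apply_eq_iterateProd_mul [CommMonoid R] {f : α → α} {ε x : α → R}
    (hx : ∀ a, x a = ε a * x (f a)) (a : α) (t : ℕ) :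
    x a = iterateProd f ε a t * x (f^[t] a) := by
  induction t with
  | zero => simp [iterateProd]
  | succ t ih => rw [ih, hx (f^[t] a), iterateProd_succ, iterate_succ_apply', mul_assoc]

theorem eq_zero_of_iterateProd_minimalPeriod_eq_neg_one [CommRing R] [IsAddTorsionFree R]
    {f : α → α} {ε x : α → R} (hx : ∀ a, x a = ε a * x (f a)) {a : α}
    (ha : iterateProd f ε a (minimalPeriod f a) = -1) : x a = 0 := by
  have key := apply_eq_iterateProd_mul hx a (minimalPeriod f a)
  rw [iterate_minimalPeriod, ha, neg_one_mul] at key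
  exact self_eq_neg.mp key

noncomputable def orbitVector [CommSemiring R] [DecidableEq α] (f : α → α) (ε : α → R)
    (a j : α) : R :=
  ∑ t ∈ range (minimalPeriod f a), if f^[t] a = j then iterateProd f ε a t else 0

theorem orbitVector_self [CommSemiring R] [DecidableEq α] {f : α → α} {a : α}
    (ha : a ∈ periodicPts f) (ε : α → R) : orbitVector f ε a a = 1 := by
  have hpos := minimalPeriod_pos_of_mem_periodicPts ha
  rw [orbitVector, sum_eq_single_of_mem 0 (mem_range.mpr hpos)]
  · simp [iterateProd]
  · intro t ht ht0
    exact if_neg (not_isPeriodicPt_of_pos_of_lt_minimalPeriod ht0 (mem_range.mp ht))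

theorem orbitVector_eq_mul [CommRing R] [DecidableEq α] {f : α → α} (hf : Injective f)
    {ε : α → R} (hε : ∀ j, ε j * ε j = 1) {a : α}
    (ha : iterateProd f ε a (minimalPeriod f a) = 1) (j : α) :
    orbitVector f ε a j = ε j * orbitVector f ε a (f j) := by
  set m := minimalPeriod f a
  set h : ℕ → R := fun t => if f^[t] a = f j then iterateProd f ε a t else 0
  -- the summand at `t = m` equals the one at `t = 0`, so the sum may be shifted by one step
  have shift : ∑ t ∈ range m, h t = ∑ t ∈ range m, h (t + 1) := by
    have hm : h m = h 0 := by
      have hper : f^[m] a = f^[0] a := iterate_minimalPeriod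
      simp only [h, hper]
      rw [ha]
      simp only [iterateProd, range_zero, prod_empty]
    have := sum_range_succ' h m
    rw [sum_range_succ, hm] at this
    exact add_right_cancel this
  rw [orbitVector, orbitVector, shift, mul_sum]
  refine sum_congr rfl fun t _ => ?_
  simp only [h, iterate_succ_apply', hf.eq_iff, iterateProd_succ]
  split_ifs with htj
  · rw [htj, mul_left_comm, hε, mul_one]
  · rw [mul_zero]

end IterateProd

theorem Equiv.Perm.sameCycle_iff_exists_iterate_lt_minimalPeriod {α : Type*} [Finite α]
    {τ : Equiv.Perm α} {a b : α} :
    τ.SameCycle a b ↔ ∃ t < minimalPeriod τ a, τ^[t] a = b := by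
  constructor
  · intro hab
    obtain ⟨t, ht⟩ := hab.exists_nat_pow_eq
    refine ⟨t % minimalPeriod τ a, Nat.mod_lt _ ?_, ?_⟩
    · exact minimalPeriod_pos_of_mem_periodicPts (τ.injective.mem_periodicPts a)
    · rw [iterate_mod_minimalPeriod_eq, ← ht, Equiv.Perm.iterate_eq_pow]
  · rintro ⟨t, -, rfl⟩
    exact ⟨t, by rw [zpow_natCast, Equiv.Perm.iterate_eq_pow]⟩

theorem prod_permOrbit_eq_iterateProd {n : ℕ} {R : Type*} [CommMonoid R]
    (σ : Equiv.Perm (Fin n)) (ε : Fin n → R) (i : Fin n) :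
    ∏ j ∈ (Set.toFinite (permOrbit σ i)).toFinset, ε j
      = iterateProd (⇑σ⁻¹) ε i (minimalPeriod (⇑σ⁻¹) i) := by
  have horbit : (Set.toFinite (permOrbit σ i)).toFinset
      = (range (minimalPeriod (⇑σ⁻¹) i)).image (fun t => (⇑σ⁻¹)^[t] i) := by
    ext j
    simp only [Set.Finite.mem_toFinset, mem_image, mem_range]
    exact Equiv.Perm.sameCycle_inv.symm.trans
      Equiv.Perm.sameCycle_iff_exists_iterate_lt_minimalPeriod
  rw [horbit, prod_image]
  · rfl
  · intro s hs t ht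
    exact iterate_injOn_Iio_minimalPeriod (by simpa using hs) (by simpa using ht)

/-- A signed permutation `(ε, σ)` of `Fin n` (with `ε` a sign vector) has no nonzero fixed
vector, i.e. the only `x : Fin n → ℝ` with `x i = ε i · x (σ⁻¹ i)` for all `i` is `x = 0`,
if and only if for every orbit `O` of the cyclic group generated by `σ` the sign product
`∏_{i ∈ O} ε i` equals `−1`. -/
theorem signedPerm_elliptic_iff (n : ℕ) (σ : Equiv.Perm (Fin n)) (ε : Fin n → ℝ)
    (hε : ∀ i, ε i = 1 ∨ ε i = -1) :
    (∀ x : Fin n → ℝ, (∀ i, x i = ε i * x (σ⁻¹ i)) → x = 0) ↔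
      (∀ i : Fin n, ∏ j ∈ (Set.toFinite (permOrbit σ i)).toFinset, ε j = -1) := by
  have hsq : ∀ j, ε j * ε j = 1 := fun j => by rcases hε j with h | h <;> simp [h]
  simp only [prod_permOrbit_eq_iterateProd]
  constructor
  · intro h i
    refine (mul_self_eq_one_iff.mp (iterateProd_mul_self hsq _ i _)).resolve_left fun h1 => ?_
    have hx := congr_fun (h _ (orbitVector_eq_mul σ⁻¹.injective hsq h1)) i
    rw [orbitVector_self (σ⁻¹.injective.mem_periodicPts i)] at hx
    exact one_ne_zero hx
  · intro h x hx
    funext i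
    exact eq_zero_of_iterateProd_minimalPeriod_eq_neg_one hx (h i)
end

section
/- Let σ be a permutation of Fin 4 and ε : Fin 4 → ℝ a function with ε(i) ∈ {1, −1} for every i and ∏_{i} ε(i) = 1 (so the pair (ε, σ) corresponds to an element of the Weyl group of type D₄, realized as permutations of the coordinates of ℝ⁴ composed with an even number of sign changes). Then the signed permutation (ε, σ) has no nonzero fixed vector, i.e. the only x : Fin 4 → ℝ with x(i) = ε(i) · x(σ⁻¹(i)) for all i is x = 0, if and only if one of the following holds: (i) σ is a product of two disjoint transpositions (cycle type {2, 2}) and the product of ε over each of the two σ-orbits equals −1; (ii) σ is a 3-cycle, the product of ε over its 3-element orbit equals −1, and ε takes the value −1 at the fixed point of σ; (iii) σ is the identity and ε(i) = −1 for all i. -/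
noncomputable def orbitSignProd {n : ℕ} (σ : Equiv.Perm (Fin n)) (ε : Fin n → ℝ)
    (i : Fin n) : ℝ :=
  ∏ j ∈ (Set.toFinite (permOrbit σ i)).toFinset, ε j

/-!
A vector fixed by `(ε, σ)` vanishes everywhere or nowhere on each `σ`-orbit `O`, and comparing
the product of its entries over `O` with that of its image shows that it vanishes on `O` unless
`∏_{j ∈ O} ε j = 1`; conversely, when that product is `1`, propagating the value `1` along the
cycle through a point closes up consistently. Hence `(ε, σ)` has no nonzero fixed vector iff
every orbit has sign product `-1`, in particular `ε = -1` at every fixed point of `σ`. In degree 4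
the permutations other than `1`, the 3-cycles and those of type `{2, 2}` are cycles of length 2
or 4; for them the sign products over the nontrivial orbit and over the even number of fixed
points multiply to `∏ ε = -1`, contradicting evenness.
-/

open Finset Function

theorem Finset.sum_range_shift_eq_of_eq {M : Type*} [AddCommGroup M] {F : ℕ → M} {m : ℕ}
    (h : F m = F 0) : ∑ k ∈ range m, F (k + 1) = ∑ k ∈ range m, F k :=
  add_right_cancel <| (sum_range_succ' F m).symm.trans (h ▸ sum_range_succ F m)

namespace Equiv.Perm

variable {α : Type*} {σ : Perm α} {i j : α}

def IsSignedFixed (σ : Perm α) (ε x : α → ℝ) : Prop :=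
  ∀ i, x i = ε i * x (σ⁻¹ i)

theorem SameCycle.apply_eq_of_invariant [Finite α] {β : Type*} {f : α → β}
    (hf : ∀ k, f (σ k) = f k) (h : σ.SameCycle i j) : f i = f j := by
  obtain ⟨k, rfl⟩ := h.exists_nat_pow_eq
  clear h
  induction k with
  | zero => rfl
  | succ k ih => rw [ih, pow_succ', mul_apply, hf]

variable [Fintype α] [DecidableEq α]

theorem prod_sameCycle_apply {M : Type*} [CommMonoid M] (σ : Perm α) (i : α) (f : α → M) :
    ∏ j with σ.SameCycle i j, f (σ j) = ∏ j with σ.SameCycle i j, f j :=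
  prod_equiv σ (by simp) fun _ _ => rfl

theorem filter_sameCycle_of_apply_eq (h : σ i = i) :
    ({j | σ.SameCycle i j} : Finset α) = {i} := by
  ext j
  simp only [mem_filter, mem_univ, true_and, mem_singleton]
  exact ⟨fun hj => (hj.eq_of_left h).symm, fun hj => hj ▸ SameCycle.refl σ i⟩

theorem filter_sameCycle_eq_image_range (σ : Perm α) (i : α) :
    ({j | σ.SameCycle i j} : Finset α) =
      (range (minimalPeriod σ i)).image fun k => (σ ^ k) i := by
  ext j
  simp only [mem_filter, mem_univ, true_and, mem_image, mem_range]
  constructor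
  · intro hj
    obtain ⟨k, rfl⟩ := hj.exists_nat_pow_eq
    exact ⟨k % minimalPeriod σ i, Nat.mod_lt _ (minimalPeriod_pos_of_mem_periodicPts
      (σ.injective.mem_periodicPts i)), by rw [coe_pow, coe_pow, iterate_mod_minimalPeriod_eq]⟩
  · rintro ⟨k, -, rfl⟩
    exact (SameCycle.refl σ i).pow_right

theorem prod_range_minimalPeriod_pow_apply {M : Type*} [CommMonoid M] (σ : Perm α) (i : α)
    (f : α → M) :
    ∏ k ∈ range (minimalPeriod σ i), f ((σ ^ k) i) = ∏ j with σ.SameCycle i j, f j := by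
  rw [filter_sameCycle_eq_image_range, prod_image fun k hk l hl h => ?_]
  exact iterate_injOn_Iio_minimalPeriod (by simpa using hk) (by simpa using hl)
    (by simpa only [coe_pow] using h)

theorem prod_sameCycle_eq_one_or_neg_one {ε : α → ℝ} (hε : ∀ j, ε j = 1 ∨ ε j = -1)
    (σ : Perm α) (i : α) :
    ∏ j with σ.SameCycle i j, ε j = 1 ∨ ∏ j with σ.SameCycle i j, ε j = -1 :=
  prod_induction _ (fun a => a = 1 ∨ a = -1)
    (fun a b ha hb => by rcases ha with rfl | rfl <;> rcases hb with rfl | rfl <;> norm_num)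
    (.inl rfl) fun j _ => hε j

theorem IsSignedFixed.prod_sameCycle_eq_one {ε x : α → ℝ} (hε : ∀ j, ε j ≠ 0)
    (hx : σ.IsSignedFixed ε x) (hi : x i ≠ 0) : ∏ j with σ.SameCycle i j, ε j = 1 := by
  have hzero : ∀ k, (x (σ k) = 0) = (x k = 0) := fun k => by simp [hx (σ k), hε]
  have hne : ∏ j with σ.SameCycle i j, x j ≠ 0 := prod_ne_zero_iff.mpr fun j hj => by
    have h := (mem_filter.mp hj).2.apply_eq_of_invariant (f := fun j => x j = 0) hzero
    rwa [ne_eq, ← h]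
  have hshift : ∏ j with σ.SameCycle i j, x (σ⁻¹ j) = ∏ j with σ.SameCycle i j, x j := by
    simpa using (prod_sameCycle_apply σ i fun j => x (σ⁻¹ j)).symm
  refine mul_right_cancel₀ hne ?_
  calc (∏ j with σ.SameCycle i j, ε j) * ∏ j with σ.SameCycle i j, x j
      = ∏ j with σ.SameCycle i j, ε j * x (σ⁻¹ j) := by rw [prod_mul_distrib, hshift]
    _ = 1 * ∏ j with σ.SameCycle i j, x j := by
      rw [one_mul]
      exact prod_congr rfl fun j _ => (hx j).symm

theorem isSignedFixed_sum_range_ite {ε : α → ℝ} {p : ℕ → α} {g : ℕ → ℝ} {m : ℕ}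
    (hp : ∀ k, p (k + 1) = σ (p k)) (hg : ∀ k, g (k + 1) = ε (p (k + 1)) * g k)
    (hpm : p m = p 0) (hgm : g m = g 0) :
    σ.IsSignedFixed ε fun j => ∑ k ∈ range m, if p k = j then g k else 0 := by
  intro j
  have hstep : ∀ k, ε j * (if p k = σ⁻¹ j then g k else 0) =
      if p (k + 1) = j then g (k + 1) else 0 := fun k => by
    rw [hp]
    simp only [← Perm.eq_inv_iff_eq]
    split_ifs with hk
    · rw [hg, hp, hk]
      simp
    · rw [mul_zero]
  simp only [mul_sum, hstep]
  exact (sum_range_shift_eq_of_eq (F := fun k => if p k = j then g k else 0)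
    (by simp only [hpm, hgm])).symm

theorem exists_isSignedFixed_ne_zero_of_prod_sameCycle_eq_one {ε : α → ℝ}
    (h : ∏ j with σ.SameCycle i j, ε j = 1) : ∃ x, x ≠ 0 ∧ σ.IsSignedFixed ε x := by
  set m := minimalPeriod σ i
  set p : ℕ → α := fun k => (σ ^ k) i with hp
  have hm : 0 < m := minimalPeriod_pos_of_mem_periodicPts (σ.injective.mem_periodicPts i)
  have hpm : p m = p 0 := by
    simp only [hp, coe_pow]
    exact iterate_minimalPeriod
  have hpsucc : ∀ k, p (k + 1) = σ (p k) := fun k => by simp only [hp, pow_succ', mul_apply]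
  have hinj : Set.InjOn p (Set.Iio m) := by
    simpa only [hp, coe_pow] using iterate_injOn_Iio_minimalPeriod (f := σ) (x := i)
  -- `g k` is the value of the fixed vector at `p k`; `g m = g 0` is the hypothesis on the orbit
  set g : ℕ → ℝ := fun k => ∏ t ∈ range k, ε (p (t + 1)) with hg
  have hgsucc : ∀ k, g (k + 1) = ε (p (k + 1)) * g k := fun k => by
    simp only [hg, prod_range_succ, mul_comm]
  have hgm : g m = g 0 := by
    calc g m = ∏ t ∈ range m, ε (σ (p t)) := by simp only [hg, hpsucc]
      _ = 1 := (prod_range_minimalPeriod_pow_apply σ i fun j => ε (σ j)).trans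
          (by rw [prod_sameCycle_apply, h])
      _ = g 0 := by simp [hg]
  refine ⟨_, fun hx => ?_, isSignedFixed_sum_range_ite hpsucc hgsucc hpm hgm⟩
  have hxi := congrFun hx i
  rw [sum_eq_single_of_mem 0 (mem_range.mpr hm) fun k hk hk0 => if_neg fun hk' =>
    hk0 (hinj (by simpa using hk) (by simpa using hm) (hk'.trans rfl))] at hxi
  simp [hp, hg] at hxi

theorem forall_isSignedFixed_eq_zero_iff {ε : α → ℝ} (hε : ∀ j, ε j = 1 ∨ ε j = -1) :
    (∀ x, σ.IsSignedFixed ε x → x = 0) ↔ ∀ i, ∏ j with σ.SameCycle i j, ε j = -1 := by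
  refine ⟨fun h i => (prod_sameCycle_eq_one_or_neg_one hε σ i).resolve_left fun hi => ?_,
    fun h x hx => funext fun i => by_contra fun hi => ?_⟩
  · obtain ⟨x, hx0, hx⟩ := exists_isSignedFixed_ne_zero_of_prod_sameCycle_eq_one hi
    exact hx0 (h x hx)
  · have hε0 : ∀ j, ε j ≠ 0 := fun j => by rcases hε j with h | h <;> norm_num [h]
    have := hx.prod_sameCycle_eq_one hε0 hi
    rw [h i] at this
    norm_num at this

theorem forall_prod_sameCycle_eq_neg_one_iff {ε : α → ℝ} :
    (∀ i, ∏ j with σ.SameCycle i j, ε j = -1) ↔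
      (∀ i, σ i ≠ i → ∏ j with σ.SameCycle i j, ε j = -1) ∧
        ∀ i, σ i = i → ε i = -1 := by
  refine ⟨fun h => ⟨fun i _ => h i, fun i hi => ?_⟩, fun ⟨hmoved, hfixed⟩ i => ?_⟩
  · simpa [filter_sameCycle_of_apply_eq hi] using h i
  · by_cases hi : σ i = i
    · simpa [filter_sameCycle_of_apply_eq hi] using hfixed i hi
    · exact hmoved i hi

theorem IsCycle.prod_eq_of_forall_prod_sameCycle {ε : α → ℝ} (hσ : σ.IsCycle)
    (h : ∀ i, ∏ j with σ.SameCycle i j, ε j = -1) :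
    ∏ j, ε j = -(-1) ^ (Fintype.card α - #σ.support) := by
  obtain ⟨a, ha, hsame⟩ := hσ
  have hsupp : σ.support = ({j | σ.SameCycle a j} : Finset α) := by
    ext j
    simp only [mem_support, mem_filter, mem_univ, true_and]
    exact ⟨@hsame j, fun hj => hj.apply_eq_self_iff.not.mp ha⟩
  have hfixed := (forall_prod_sameCycle_eq_neg_one_iff.mp h).2
  rw [← prod_mul_prod_compl σ.support, hsupp, h a, ← hsupp,
    prod_congr rfl fun j hj => hfixed j (by simpa using hj), prod_const, card_compl]
  ring

theorem eq_one_or_isCycle_or_cycleType_eq_two_two (hα : Fintype.card α ≤ 4) (σ : Perm α) :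
    σ = 1 ∨ σ.IsCycle ∨ σ.cycleType = {2, 2} := by
  rcases Nat.lt_or_ge (Multiset.card σ.cycleType) 2 with hcard | hcard
  · interval_cases h : Multiset.card σ.cycleType
    · exact .inl (cycleType_eq_zero.mp (Multiset.card_eq_zero.mp h))
    · exact .inr (.inl (card_cycleType_eq_one.mp h))
  · refine .inr (.inr ?_)
    have hsum := σ.sum_cycleType_le.trans hα
    have htwo : ∀ k ∈ σ.cycleType, 2 ≤ k := fun k hk => two_le_of_mem_cycleType hk
    have hcard2 : Multiset.card σ.cycleType = 2 := by
      have := (Multiset.card_nsmul_le_sum htwo).trans hsum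
      rw [smul_eq_mul] at this
      omega
    obtain ⟨a, b, hab⟩ := Multiset.card_eq_two.mp hcard2
    simp only [hab, Multiset.insert_eq_cons, Multiset.sum_cons, Multiset.sum_singleton,
      Multiset.mem_cons, Multiset.mem_singleton, forall_eq_or_imp, forall_eq] at hsum htwo
    obtain ⟨rfl, rfl⟩ : a = 2 ∧ b = 2 := by omega
    exact hab

theorem IsCycle.isThreeCycle_of_prod_eq_one {ε : α → ℝ} (hσ : σ.IsCycle)
    (hα : Fintype.card α = 4) (h : ∀ i, ∏ j with σ.SameCycle i j, ε j = -1)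
    (hprod : ∏ j, ε j = 1) : σ.IsThreeCycle := by
  rw [hσ.prod_eq_of_forall_prod_sameCycle h, hα] at hprod
  have h2 := hσ.two_le_card_support
  have h4 := hα ▸ σ.support.card_le_univ
  rw [← card_support_eq_three_iff]
  interval_cases #σ.support <;> first | rfl | norm_num at hprod

end Equiv.Perm

open Equiv.Perm

theorem orbitSignProd_eq_prod_sameCycle {n : ℕ} (σ : Equiv.Perm (Fin n)) (ε : Fin n → ℝ)
    (i : Fin n) : orbitSignProd σ ε i = ∏ j with σ.SameCycle i j, ε j := by
  rw [orbitSignProd]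
  congr 1
  ext j
  simp [permOrbit]
  rfl

/-- An element of the Weyl group of type `D₄`, realized as a signed permutation `(ε, σ)` of
the coordinates of `ℝ⁴` with evenly many sign changes (`∏ ε i = 1`), has no nonzero fixed
vector if and only if one of the following holds:
(i) `σ` has cycle type `{2, 2}` and the product of `ε` over each of the two `σ`-orbits is `−1`;
(ii) `σ` is a 3-cycle, the product of `ε` over its 3-element orbit is `−1`, and `ε` takes the
value `−1` at the fixed point of `σ`;
(iii) `σ` is the identity and `ε i = −1` for all `i`. -/
theorem D4_elliptic_classification (σ : Equiv.Perm (Fin 4)) (ε : Fin 4 → ℝ)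
    (hε : ∀ i, ε i = 1 ∨ ε i = -1) (hprod : ∏ i, ε i = 1) :
    (∀ x : Fin 4 → ℝ, (∀ i, x i = ε i * x (σ⁻¹ i)) → x = 0) ↔
      ((σ.cycleType = {2, 2} ∧ ∀ i, orbitSignProd σ ε i = -1) ∨
        (σ.IsThreeCycle ∧ (∀ i, σ i ≠ i → orbitSignProd σ ε i = -1) ∧
          (∀ i, σ i = i → ε i = -1)) ∨
        (σ = 1 ∧ ∀ i, ε i = -1)) := by
  simp only [orbitSignProd_eq_prod_sameCycle]
  refine (forall_isSignedFixed_eq_zero_iff hε).trans ⟨fun h => ?_, ?_⟩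
  · rcases eq_one_or_isCycle_or_cycleType_eq_two_two (by simp) σ with rfl | hσ | hσ
    · exact .inr (.inr ⟨rfl, fun i => (forall_prod_sameCycle_eq_neg_one_iff.mp h).2 i rfl⟩)
    · exact .inr (.inl ⟨hσ.isThreeCycle_of_prod_eq_one (by simp) h hprod,
        forall_prod_sameCycle_eq_neg_one_iff.mp h⟩)
    · exact .inl ⟨hσ, h⟩
  · rintro (⟨-, h⟩ | ⟨-, h⟩ | ⟨rfl, h⟩)
    · exact h
    · exact forall_prod_sameCycle_eq_neg_one_iff.mpr h
    · exact forall_prod_sameCycle_eq_neg_one_iff.mpr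
        ⟨fun i hi => (hi rfl).elim, fun i _ => h i⟩
end
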